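/- Let φ be an endomorphism of ℙ¹ defined over a global field K with good reduction outside a finite set S of places, and suppose P = P_{−m+1} ↦ P_{−m+2} ↦ … ↦ P_{−1} ↦ P₀ = [0:1] ↦ [0:1] is an orbit ending in the fixed point [0:1]. Then for all integers a, b with 0 < a < b ≤ m−1 and all places v ∉ S: (a) δ_v(P_{−b}, P₀) ≤ δ_v(P_{−a}, P₀), and (b) δ_v(P_{−b}, P_{−a}) = δ_v(P_{−b}, P₀). -/

import Mathlib

noncomputable section

/-- The `v`-adic logarithmic distance between coordinate representatives of points of
`ℙ¹(K)`. -/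
def logDist {K : Type} [Field K] (v : K → WithTop ℤ) (P Q : K × K) : WithTop ℤ :=
  v (P.1 * Q.2 - Q.1 * P.2) - min (v P.1) (v P.2) - min (v Q.1) (v Q.2)

/-- Evaluation at a point of the pair of binary forms
`F(X,Y) = ∑ aᵢ Xⁱ Y^(d−i)`, `G(X,Y) = ∑ bᵢ Xⁱ Y^(d−i)` of degree `d`,
i.e. the map `φ([X:Y]) = [F(X,Y):G(X,Y)]` in homogeneous coordinates. -/
def evalPair {K : Type} [CommRing K] (d : ℕ) (a b : Fin (d+1) → K) (P : K × K) : K × K :=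
  (∑ i : Fin (d+1), a i * P.1 ^ (i:ℕ) * P.2 ^ (d - (i:ℕ)),
   ∑ i : Fin (d+1), b i * P.1 ^ (i:ℕ) * P.2 ^ (d - (i:ℕ)))

/-- The Sylvester matrix of the two binary forms of degree `d` with coefficient
vectors `a`, `b`. -/
def sylvester {K : Type} [CommRing K] (d : ℕ) (a b : Fin (d+1) → K) :
    Matrix (Fin (d+d)) (Fin (d+d)) K :=
  fun i j =>
    if _ : (i:ℕ) < d then
      if hj : (i:ℕ) ≤ (j:ℕ) ∧ (j:ℕ) ≤ (i:ℕ) + d then a ⟨(j:ℕ) - (i:ℕ), by omega⟩ else 0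
    else
      if hj : (i:ℕ) - d ≤ (j:ℕ) ∧ (j:ℕ) ≤ (i:ℕ) then b ⟨(j:ℕ) - ((i:ℕ) - d), by omega⟩ else 0

/-- The (homogeneous) resultant `Res(F,G)` of the two binary forms of degree `d`,
as the determinant of their Sylvester matrix. -/
def resultant {K : Type} [CommRing K] (d : ℕ) (a b : Fin (d+1) → K) : K :=
  (sylvester d a b).det

/-- The map `φ = [F:G]` has good reduction at the place `v`: after multiplying `F`
and `G` by a suitable nonzero scalar `u` (so as to be in `v`-reduced form: all
coefficients in the valuation ring of `v` and at least one of them a `v`-unit), the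
resultant `Res(uF, uG)` is a `v`-unit. -/
def GoodReduction {K : Type} [Field K] (v : K → WithTop ℤ) (d : ℕ)
    (a b : Fin (d+1) → K) : Prop :=
  ∃ u : K, u ≠ 0 ∧ (∀ i, 0 ≤ v (u * a i) ∧ 0 ≤ v (u * b i)) ∧
    ((∃ i, v (u * a i) = 0) ∨ (∃ i, v (u * b i) = 0)) ∧
    v (resultant d (fun i => u * a i) (fun i => u * b i)) = 0

/-! Good reduction makes `φ` non-expanding for `δ_v`. In normalized coordinates
(`min (v x) (v y) = 0`) the cross term `x₁y₂ − x₂y₁` divides, over the valuation ring, the cross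
term of the images; and `φ` keeps coordinates normalized, because `Res(F, G) · x^(2d−1)` and
`Res(F, G) · y^(2d−1)` lie in the ideal `(F(x, y), G(x, y))` while the resultant is a unit.

Along the backward orbit, `k` applications of `φ` give
`δ(P_{−i}, P_{−j}) ≤ δ(P_{−i+k}, P_{−j+k})`, so `δ(P_{−t}, P₀)` decreases in `t`: this is (a).
For (b), if `δ(P_{−t}, P_{−s}) > δ(P_{−t}, P₀)`, the ultrametric inequality gives
`δ(P_{−s}, P₀) = δ(P_{−t}, P₀)`; shifting by `s` or by `t − s` bounds `δ(P_{−t}, P_{−s})` by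
`δ(P_{−t+s}, P₀)` or, by strong induction on `t`, by `δ(P_{−s}, P₀)`, a contradiction either way. -/

section Forms

open Finset Matrix

variable {R : Type} [CommRing R] {d : ℕ} (a b : Fin (d+1) → R)

theorem evalPair_smul (c : R) (P : R × R) :
    evalPair d a b (c • P) = c ^ d • evalPair d a b P := by
  refine Prod.ext ?_ ?_ <;>
  · simp only [evalPair, Prod.smul_fst, Prod.smul_snd, smul_eq_mul, mul_sum]
    refine sum_congr rfl fun i _ => ?_
    rw [← pow_mul_pow_sub c (Nat.le_of_lt_succ i.isLt)]
    ring

theorem evalPair_mul_coeff (u : R) (P : R × R) :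
    evalPair d (fun i => u * a i) (fun i => u * b i) P = u • evalPair d a b P := by
  refine Prod.ext ?_ ?_ <;>
  · simp only [evalPair, Prod.smul_fst, Prod.smul_snd, smul_eq_mul, mul_sum]
    exact sum_congr rfl fun i _ => by ring

theorem evalPair_map {S : Type} [CommRing S] (f : R →+* S) (P : R × R) :
    evalPair d (f ∘ a) (f ∘ b) (Prod.map f f P) = Prod.map f f (evalPair d a b P) := by
  simp [evalPair]

theorem resultant_map {S : Type} [CommRing S] (f : R →+* S) :
    f (resultant d a b) = resultant d (f ∘ a) (f ∘ b) := by
  rw [resultant, resultant, RingHom.map_det]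
  congr 1
  ext i j
  simp only [RingHom.mapMatrix_apply, map_apply, sylvester]
  split_ifs <;> simp

theorem sub_dvd_monomial_cross {i j : ℕ} (hi : i ≤ d) (hj : j ≤ d) (x₁ y₁ x₂ y₂ : R) :
    x₁ * y₂ - x₂ * y₁ ∣
      x₁ ^ i * y₁ ^ (d - i) * (x₂ ^ j * y₂ ^ (d - j)) -
        x₂ ^ i * y₂ ^ (d - i) * (x₁ ^ j * y₁ ^ (d - j)) := by
  wlog hij : i ≤ j generalizing i j
  · rw [← dvd_neg]
    convert this hj hi (le_of_not_ge hij) using 1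
    ring
  obtain ⟨k, rfl⟩ := Nat.exists_eq_add_of_le hij
  obtain ⟨l, rfl⟩ := Nat.exists_eq_add_of_le hj
  rw [show i + k + l - i = k + l by omega, show i + k + l - (i + k) = l by omega]
  have h : x₁ * y₂ - x₂ * y₁ ∣ (x₂ * y₁) ^ k - (x₁ * y₂) ^ k := by
    rw [← dvd_neg, neg_sub]
    exact sub_dvd_pow_sub_pow _ _ k
  convert h.mul_left ((x₁ * x₂) ^ i * (y₁ * y₂) ^ l) using 1
  ring

theorem sub_dvd_evalPair_cross (x₁ y₁ x₂ y₂ : R) :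
    x₁ * y₂ - x₂ * y₁ ∣
      (evalPair d a b (x₁, y₁)).1 * (evalPair d a b (x₂, y₂)).2 -
        (evalPair d a b (x₂, y₂)).1 * (evalPair d a b (x₁, y₁)).2 := by
  simp only [evalPair, sum_mul_sum, ← sum_sub_distrib]
  refine dvd_sum fun i _ => dvd_sum fun j _ => ?_
  convert (sub_dvd_monomial_cross (Nat.le_of_lt_succ i.isLt) (Nat.le_of_lt_succ j.isLt)
    x₁ y₁ x₂ y₂).mul_left (a i * b j) using 1
  ring

theorem sum_sylvester_row (c : Fin (d+1) → R) {r : ℕ} (hr : r < d) (x y : R) :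
    ∑ j : Fin (d+d), (if h : r ≤ (j:ℕ) ∧ (j:ℕ) ≤ r + d then c ⟨(j:ℕ) - r, by omega⟩ else 0) *
        (x ^ (j:ℕ) * y ^ (d+d-1-(j:ℕ))) =
      x ^ r * y ^ (d-1-r) * ∑ k : Fin (d+1), c k * x ^ (k:ℕ) * y ^ (d - (k:ℕ)) := by
  rw [mul_sum]
  symm
  refine sum_of_injOn (fun k => ⟨k + r, by omega⟩) (fun k _ l _ h => ?_)
    (fun _ _ => mem_coe.2 (mem_univ _)) (fun j _ hj => ?_) (fun k _ => ?_)
  · simpa [Fin.ext_iff] using h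
  · rw [dif_neg, zero_mul]
    rintro ⟨h₁, h₂⟩
    exact hj ⟨⟨(j:ℕ) - r, by omega⟩, by simp, by ext; simp; omega⟩
  · have hk := k.isLt
    dsimp only
    rw [dif_pos ⟨by omega, by omega⟩]
    simp only [Nat.add_sub_cancel, Fin.eta]
    rw [show d + d - 1 - (k + r) = (d - 1 - r) + (d - k) by omega, pow_add, pow_add]
    ring

theorem sylvester_mulVec (x y : R) :
    sylvester d a b *ᵥ (fun j : Fin (d+d) => x ^ (j:ℕ) * y ^ (d+d-1-(j:ℕ))) =
      fun i : Fin (d+d) => if (i:ℕ) < d then x ^ (i:ℕ) * y ^ (d-1-(i:ℕ)) * (evalPair d a b (x, y)).1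
        else x ^ ((i:ℕ) - d) * y ^ (d+d-1-(i:ℕ)) * (evalPair d a b (x, y)).2 := by
  ext i
  simp only [mulVec_apply_eq_sum, evalPair]
  split_ifs with hi
  · rw [← sum_sylvester_row a hi]
    refine sum_congr rfl fun j _ => ?_
    simp only [sylvester, dif_pos hi]
  · rw [show d + d - 1 - (i:ℕ) = d - 1 - ((i:ℕ) - d) by omega,
      ← sum_sylvester_row b (r := (i:ℕ) - d) (by omega)]
    refine sum_congr rfl fun j _ => ?_
    simp only [sylvester, dif_neg hi]
    by_cases h : (i:ℕ) - d ≤ j ∧ (j:ℕ) ≤ i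
    · rw [dif_pos h, dif_pos (by omega)]
    · rw [dif_neg h, dif_neg (by omega)]

theorem resultant_mul_mem_span (x y : R) (j : Fin (d+d)) :
    resultant d a b * (x ^ (j:ℕ) * y ^ (d+d-1-(j:ℕ))) ∈
      Ideal.span {(evalPair d a b (x, y)).1, (evalPair d a b (x, y)).2} := by
  set w : Fin (d+d) → R := fun j => x ^ (j:ℕ) * y ^ (d+d-1-(j:ℕ))
  have hadj : resultant d a b • w = (sylvester d a b).adjugate *ᵥ (sylvester d a b *ᵥ w) := by
    rw [mulVec_mulVec, adjugate_mul, smul_mulVec, one_mulVec, resultant]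
  have hj : resultant d a b * w j = (resultant d a b • w) j := rfl
  rw [hj, hadj, sylvester_mulVec, mulVec_apply_eq_sum]
  refine Ideal.sum_mem _ fun i _ => Ideal.mul_mem_left _ _ ?_
  split_ifs
  · exact Ideal.mul_mem_left _ _ (Ideal.subset_span (by simp))
  · exact Ideal.mul_mem_left _ _ (Ideal.subset_span (by simp))

end Forms

theorem add_sub_add_left_of_ne_top {α : Type*} [LinearOrderedAddCommGroupWithTop α] {n : α}
    (hn : n ≠ ⊤) (x y : α) : n + x - (n + y) = x - y := by
  rw [sub_eq_add_neg, sub_eq_add_neg, neg_add_rev, add_comm (-y), add_add_add_comm,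
    LinearOrderedAddCommGroupWithTop.add_neg_cancel_iff_ne_top.mpr hn, zero_add]

section Valuation

variable {K : Type} [Field K] (v : AddValuation K (WithTop ℤ))

theorem le_of_dvd_integer {x y : v.toValuation.integer} (h : x ∣ y) : v x ≤ v y := by
  obtain ⟨g, rfl⟩ := h
  rw [Subring.coe_mul, AddValuation.map_mul]
  exact le_add_of_nonneg_right g.2

theorem min_le_of_mem_span_pair {p q z : v.toValuation.integer}
    (hz : z ∈ Ideal.span {p, q}) : min (v p) (v q) ≤ v z := by
  obtain ⟨α, β, rfl⟩ := Ideal.mem_span_pair.mp hz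
  rw [Subring.coe_add, Subring.coe_mul, Subring.coe_mul]
  refine le_trans (min_le_min ?_ ?_) (v.map_add _ _)
  · rw [AddValuation.map_mul]; exact le_add_of_nonneg_left α.2
  · rw [AddValuation.map_mul]; exact le_add_of_nonneg_left β.2

def IsNormalized (P : K × K) : Prop := min (v P.1) (v P.2) = 0

variable {v}

theorem IsNormalized.nonneg_fst {P : K × K} (hP : IsNormalized v P) : 0 ≤ v P.1 :=
  hP ▸ min_le_left _ _

theorem IsNormalized.nonneg_snd {P : K × K} (hP : IsNormalized v P) : 0 ≤ v P.2 :=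
  hP ▸ min_le_right _ _

variable (v)

theorem exists_smul_isNormalized {P : K × K} (hP : P ≠ 0) :
    ∃ c : K, c ≠ 0 ∧ IsNormalized v (c • P) := by
  have hmin : min (v P.1) (v P.2) ≠ ⊤ := by
    rw [ne_eq, min_eq_top, v.top_iff, v.top_iff]
    exact fun h => hP (Prod.ext h.1 h.2)
  obtain ⟨x, hvx⟩ : ∃ x, v x = min (v P.1) (v P.2) :=
    (min_choice _ _).elim (fun h => ⟨P.1, h.symm⟩) (fun h => ⟨P.2, h.symm⟩)
  have hx : x ≠ 0 := by
    rintro rfl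
    exact hmin (hvx ▸ v.map_zero)
  refine ⟨x⁻¹, inv_ne_zero hx, ?_⟩
  rw [IsNormalized, Prod.smul_fst, Prod.smul_snd, smul_eq_mul, smul_eq_mul,
    v.map_mul, v.map_mul, min_add_add_left, ← hvx, ← v.map_mul, inv_mul_cancel₀ hx, v.map_one]

theorem logDist_comm (P Q : K × K) : logDist v P Q = logDist v Q P := by
  rw [logDist, logDist, show Q.1 * P.2 - P.1 * Q.2 = -(P.1 * Q.2 - Q.1 * P.2) by ring, v.map_neg]
  simp only [sub_eq_add_neg]
  exact add_right_comm _ _ _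

theorem logDist_smul_left {c : K} (hc : c ≠ 0) (P Q : K × K) :
    logDist v (c • P) Q = logDist v P Q := by
  have hcross : (c • P).1 * Q.2 - Q.1 * (c • P).2 = c * (P.1 * Q.2 - Q.1 * P.2) := by
    simp only [Prod.smul_fst, Prod.smul_snd, smul_eq_mul]; ring
  rw [logDist, logDist, hcross, Prod.smul_fst, Prod.smul_snd, smul_eq_mul, smul_eq_mul,
    v.map_mul, v.map_mul, v.map_mul, min_add_add_left,
    add_sub_add_left_of_ne_top ((v.ne_top_iff).mpr hc)]

theorem logDist_smul_smul {c c' : K} (hc : c ≠ 0) (hc' : c' ≠ 0) (P Q : K × K) :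
    logDist v (c • P) (c' • Q) = logDist v P Q := by
  rw [logDist_smul_left v hc, logDist_comm, logDist_smul_left v hc', logDist_comm]

theorem logDist_of_isNormalized {P Q : K × K} (hP : IsNormalized v P) (hQ : IsNormalized v Q) :
    logDist v P Q = v (P.1 * Q.2 - Q.1 * P.2) := by
  rw [logDist, hP, hQ, sub_zero, sub_zero]

theorem min_le_cross_of_isNormalized {P Q R : K × K} (hP : IsNormalized v P)
    (hQ : IsNormalized v Q) (hR : IsNormalized v R) :
    min (v (P.1 * Q.2 - Q.1 * P.2)) (v (Q.1 * R.2 - R.1 * Q.2)) ≤ v (P.1 * R.2 - R.1 * P.2) := by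
  rcases min_eq_iff.mp hQ with ⟨hQ₁, -⟩ | ⟨hQ₂, -⟩
  · calc _ ≤ min (v (R.1 * (P.1 * Q.2 - Q.1 * P.2))) (v (P.1 * (Q.1 * R.2 - R.1 * Q.2))) := by
          rw [v.map_mul, v.map_mul]
          exact min_le_min (le_add_of_nonneg_left hR.nonneg_fst)
            (le_add_of_nonneg_left hP.nonneg_fst)
      _ ≤ _ := v.map_add _ _
      _ = _ := by
          rw [show R.1 * (P.1 * Q.2 - Q.1 * P.2) + P.1 * (Q.1 * R.2 - R.1 * Q.2) =
            Q.1 * (P.1 * R.2 - R.1 * P.2) by ring, v.map_mul, hQ₁, zero_add]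
  · calc _ ≤ min (v (R.2 * (P.1 * Q.2 - Q.1 * P.2))) (v (P.2 * (Q.1 * R.2 - R.1 * Q.2))) := by
          rw [v.map_mul, v.map_mul]
          exact min_le_min (le_add_of_nonneg_left hR.nonneg_snd)
            (le_add_of_nonneg_left hP.nonneg_snd)
      _ ≤ _ := v.map_add _ _
      _ = _ := by
          rw [show R.2 * (P.1 * Q.2 - Q.1 * P.2) + P.2 * (Q.1 * R.2 - R.1 * Q.2) =
            Q.2 * (P.1 * R.2 - R.1 * P.2) by ring, v.map_mul, hQ₂, zero_add]

theorem logDist_ultra {P Q R : K × K} (hP : P ≠ 0) (hQ : Q ≠ 0) (hR : R ≠ 0) :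
    min (logDist v P Q) (logDist v Q R) ≤ logDist v P R := by
  obtain ⟨c₁, hc₁, hP'⟩ := exists_smul_isNormalized v hP
  obtain ⟨c₂, hc₂, hQ'⟩ := exists_smul_isNormalized v hQ
  obtain ⟨c₃, hc₃, hR'⟩ := exists_smul_isNormalized v hR
  rw [← logDist_smul_smul v hc₁ hc₂ P Q, ← logDist_smul_smul v hc₂ hc₃ Q R,
    ← logDist_smul_smul v hc₁ hc₃ P R,
    logDist_of_isNormalized v hP' hQ', logDist_of_isNormalized v hQ' hR',
    logDist_of_isNormalized v hP' hR']
  exact min_le_cross_of_isNormalized v hP' hQ' hR'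

variable {d : ℕ} {a b : Fin (d+1) → K}

theorem isNormalized_evalPair (hd : 1 ≤ d) (ha : ∀ i, 0 ≤ v (a i)) (hb : ∀ i, 0 ≤ v (b i))
    (hres : v (resultant d a b) = 0) {P : K × K} (hP : IsNormalized v P) :
    IsNormalized v (evalPair d a b P) := by
  set 𝒪 := v.toValuation.integer
  let a' : Fin (d+1) → 𝒪 := fun i => ⟨a i, ha i⟩
  let b' : Fin (d+1) → 𝒪 := fun i => ⟨b i, hb i⟩
  let x : 𝒪 := ⟨P.1, hP.nonneg_fst⟩
  let y : 𝒪 := ⟨P.2, hP.nonneg_snd⟩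
  have hφ : evalPair d a b P = Prod.map 𝒪.subtype 𝒪.subtype (evalPair d a' b' (x, y)) :=
    evalPair_map a' b' 𝒪.subtype (x, y)
  have hres' : v ((resultant d a' b' : 𝒪) : K) = 0 :=
    hres ▸ congrArg v (resultant_map a' b' 𝒪.subtype)
  obtain ⟨j, hj⟩ : ∃ j : Fin (d+d), v ((x ^ (j:ℕ) * y ^ (d+d-1-(j:ℕ)) : 𝒪) : K) = 0 := by
    rcases min_eq_iff.mp hP with ⟨h, -⟩ | ⟨h, -⟩
    · exact ⟨⟨d+d-1, by omega⟩, by simp [v.map_pow, x, h]⟩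
    · exact ⟨⟨0, by omega⟩, by simp [v.map_pow, y, h]⟩
  rw [hφ, IsNormalized, Prod.map_fst, Prod.map_snd]
  refine le_antisymm ?_ (le_min (evalPair d a' b' (x, y)).1.2 (evalPair d a' b' (x, y)).2.2)
  calc _ ≤ v ((resultant d a' b' * (x ^ (j:ℕ) * y ^ (d+d-1-(j:ℕ))) : 𝒪) : K) :=
        min_le_of_mem_span_pair v (resultant_mul_mem_span a' b' x y j)
    _ = 0 := by rw [Subring.coe_mul, v.map_mul, hres', hj, add_zero]

theorem le_cross_evalPair (ha : ∀ i, 0 ≤ v (a i)) (hb : ∀ i, 0 ≤ v (b i)) {P Q : K × K}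
    (hP : IsNormalized v P) (hQ : IsNormalized v Q) :
    v (P.1 * Q.2 - Q.1 * P.2) ≤
      v ((evalPair d a b P).1 * (evalPair d a b Q).2 -
        (evalPair d a b Q).1 * (evalPair d a b P).2) := by
  set 𝒪 := v.toValuation.integer
  let a' : Fin (d+1) → 𝒪 := fun i => ⟨a i, ha i⟩
  let b' : Fin (d+1) → 𝒪 := fun i => ⟨b i, hb i⟩
  let P' : 𝒪 × 𝒪 := (⟨P.1, hP.nonneg_fst⟩, ⟨P.2, hP.nonneg_snd⟩)
  let Q' : 𝒪 × 𝒪 := (⟨Q.1, hQ.nonneg_fst⟩, ⟨Q.2, hQ.nonneg_snd⟩)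
  have hφP : evalPair d a b P = Prod.map 𝒪.subtype 𝒪.subtype (evalPair d a' b' P') :=
    evalPair_map a' b' 𝒪.subtype P'
  have hφQ : evalPair d a b Q = Prod.map 𝒪.subtype 𝒪.subtype (evalPair d a' b' Q') :=
    evalPair_map a' b' 𝒪.subtype Q'
  have h := le_of_dvd_integer v (sub_dvd_evalPair_cross a' b' P'.1 P'.2 Q'.1 Q'.2)
  rw [hφP, hφQ]
  simpa using h

theorem logDist_le_logDist_evalPair (hd : 1 ≤ d) (ha : ∀ i, 0 ≤ v (a i))
    (hb : ∀ i, 0 ≤ v (b i)) (hres : v (resultant d a b) = 0) {P Q : K × K} (hP : P ≠ 0)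
    (hQ : Q ≠ 0) : logDist v P Q ≤ logDist v (evalPair d a b P) (evalPair d a b Q) := by
  obtain ⟨c, hc, hP'⟩ := exists_smul_isNormalized v hP
  obtain ⟨c', hc', hQ'⟩ := exists_smul_isNormalized v hQ
  calc logDist v P Q = logDist v (c • P) (c' • Q) := (logDist_smul_smul v hc hc' P Q).symm
    _ ≤ logDist v (evalPair d a b (c • P)) (evalPair d a b (c' • Q)) := by
        rw [logDist_of_isNormalized v hP' hQ', logDist_of_isNormalized v
          (isNormalized_evalPair v hd ha hb hres hP') (isNormalized_evalPair v hd ha hb hres hQ')]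
        exact le_cross_evalPair v ha hb hP' hQ'
    _ = logDist v (evalPair d a b P) (evalPair d a b Q) := by
        rw [evalPair_smul, evalPair_smul,
          logDist_smul_smul v (pow_ne_zero d hc) (pow_ne_zero d hc')]

theorem GoodReduction.logDist_le (hgood : GoodReduction v d a b) (hd : 1 ≤ d) {P Q : K × K}
    (hP : P ≠ 0) (hQ : Q ≠ 0) :
    logDist v P Q ≤ logDist v (evalPair d a b P) (evalPair d a b Q) := by
  obtain ⟨u, hu, hint, -, hres⟩ := hgood
  have h := logDist_le_logDist_evalPair v hd (fun i => (hint i).1) (fun i => (hint i).2) hres hP hQ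
  rwa [evalPair_mul_coeff, evalPair_mul_coeff, logDist_smul_smul v hu hu] at h

end Valuation

namespace BackwardOrbit

variable {α : Type*} [LinearOrder α] {D : ℕ → ℕ → α} {N : ℕ}
  (hstep : ∀ i j, i ≤ N → j ≤ N → D i j ≤ D (i - 1) (j - 1))
include hstep

theorem dist_le_dist_tsub (k : ℕ) {i j : ℕ} (hi : i ≤ N) (hj : j ≤ N) :
    D i j ≤ D (i - k) (j - k) := by
  induction k with
  | zero => exact le_rfl
  | succ k ih => exact ih.trans (hstep _ _ (by omega) (by omega))

theorem dist_zero_antitone {i j : ℕ} (hij : i ≤ j) (hj : j ≤ N) : D j 0 ≤ D i 0 := by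
  simpa [Nat.sub_sub_self hij] using dist_le_dist_tsub hstep (j - i) hj (Nat.zero_le N)

theorem dist_eq_dist_zero (hsymm : ∀ i j, i ≤ N → j ≤ N → D i j = D j i)
    (hultra : ∀ i j k, i ≤ N → j ≤ N → k ≤ N → min (D i j) (D j k) ≤ D i k)
    {s t : ℕ} (hst : s < t) (ht : t ≤ N) : D t s = D t 0 := by
  induction t using Nat.strong_induction_on generalizing s with
  | _ t IH =>
  have hs : s ≤ N := by omega
  have hge : D t 0 ≤ D t s := by
    refine le_trans (le_min le_rfl ?_) (hultra t 0 s ht (Nat.zero_le N) hs)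
    rw [hsymm 0 s (Nat.zero_le N) hs]
    exact dist_zero_antitone hstep hst.le ht
  refine le_antisymm ?_ hge
  by_contra! hlt
  have hs0 : D s 0 ≤ D t 0 :=
    (min_le_iff.mp (hultra t s 0 ht hs (Nat.zero_le N))).resolve_left hlt.not_ge
  rcases lt_or_ge (t - s) s with hlt' | hle
  · have h := dist_le_dist_tsub hstep (t - s) ht hs
    rw [Nat.sub_sub_self hst.le, IH s hst (by omega) hs] at h
    exact (h.trans hs0).not_gt hlt
  · have h := dist_le_dist_tsub hstep s ht hs
    rw [Nat.sub_self] at h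
    exact ((h.trans (dist_zero_antitone hstep hle (by omega))).trans hs0).not_gt hlt

end BackwardOrbit

theorem logDist_orbit_lemma_general {K : Type} [Field K] (v : K → WithTop ℤ)
    (hv0 : v 0 = ⊤) (hvfin : ∀ x : K, x ≠ 0 → v x ≠ ⊤)
    (hvmul : ∀ x y : K, v (x * y) = v x + v y)
    (hvadd : ∀ x y : K, min (v x) (v y) ≤ v (x + y))
    (d : ℕ) (hd : 1 ≤ d) (a b : Fin (d+1) → K)
    (hgood : GoodReduction v d a b)
    (m : ℕ) (Q : ℕ → K × K)
    (hQne : ∀ j, j ≤ m - 1 → Q j ≠ (0, 0))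
    (horb : ∀ j, j + 1 ≤ m - 1 → ∃ c : K, c ≠ 0 ∧ evalPair d a b (Q (j+1)) = c • Q j)
    (hfix : ∃ c : K, c ≠ 0 ∧ evalPair d a b (Q 0) = c • Q 0)
    (s t : ℕ) (hst : s < t) (ht : t ≤ m - 1) :
    logDist v (Q t) (Q 0) ≤ logDist v (Q s) (Q 0) ∧
      logDist v (Q t) (Q s) = logDist v (Q t) (Q 0) := by
  have hv1 : v 1 = 0 := by
    have h : v 1 + v 1 = v 1 + 0 := by rw [← hvmul, one_mul, add_zero]
    exact (add_right_inj_of_ne_top (hvfin 1 one_ne_zero)).mp h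
  let w : AddValuation K (WithTop ℤ) := AddValuation.of v hv0 hv1 hvadd hvmul
  have hback : ∀ j, j ≤ m - 1 → ∃ c : K, c ≠ 0 ∧ evalPair d a b (Q j) = c • Q (j - 1) := by
    -- `Q j` is `P_{−j}`; at `j = 0` the index `j - 1` truncates to the fixed point `P₀`
    rintro (_ | j) hj
    exacts [hfix, horb j hj]
  have hstep : ∀ i j, i ≤ m - 1 → j ≤ m - 1 →
      logDist w (Q i) (Q j) ≤ logDist w (Q (i - 1)) (Q (j - 1)) := by
    intro i j hi hj
    obtain ⟨c, hc, hci⟩ := hback i hi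
    obtain ⟨c', hc', hcj⟩ := hback j hj
    have h := GoodReduction.logDist_le w hgood hd (hQne i hi) (hQne j hj)
    rwa [hci, hcj, logDist_smul_smul w hc hc'] at h
  exact ⟨BackwardOrbit.dist_zero_antitone hstep hst.le ht,
    BackwardOrbit.dist_eq_dist_zero hstep (fun i j _ _ => logDist_comm w _ _)
      (fun i j k hi hj hk => logDist_ultra w (hQne i hi) (hQne j hj) (hQne k hk)) hst ht⟩

/-- Let `φ` be an endomorphism of `ℙ¹` defined over `K` with good reduction outside
`S`, and let
`P = P_{−m+1} ↦ P_{−m+2} ↦ … ↦ P_{−1} ↦ P₀ = [0:1] ↦ [0:1]`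
be an orbit for `φ` ending in the fixed point `[0:1]` (below, `Q j` denotes `P_{−j}`).
Then for any place `v ∉ S` (i.e. any place at which `φ` has good reduction) and any
integers `0 < s < t ≤ m−1` one has
(a) `δ_v(P_{−t}, P₀) ≤ δ_v(P_{−s}, P₀)`, and (b) `δ_v(P_{−t}, P_{−s}) = δ_v(P_{−t}, P₀)`. -/
theorem logDist_orbit_lemma {K : Type} [Field K] (v : K → WithTop ℤ)
    (hv0 : v 0 = ⊤) (hvfin : ∀ x : K, x ≠ 0 → v x ≠ ⊤)
    (hvmul : ∀ x y : K, v (x * y) = v x + v y)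
    (hvadd : ∀ x y : K, min (v x) (v y) ≤ v (x + y))
    (hvdisc : ∀ n : ℤ, ∃ x : K, v x = (n : WithTop ℤ))
    (d : ℕ) (hd : 1 ≤ d) (a b : Fin (d+1) → K)
    (hgood : GoodReduction v d a b)
    (m : ℕ) (hm : 1 ≤ m) (Q : ℕ → K × K)
    (hQ0 : Q 0 = (0, 1))
    (hQne : ∀ j, j ≤ m - 1 → Q j ≠ (0, 0))
    (horb : ∀ j, j + 1 ≤ m - 1 → ∃ c : K, c ≠ 0 ∧ evalPair d a b (Q (j+1)) = c • Q j)
    (hfix : ∃ c : K, c ≠ 0 ∧ evalPair d a b (Q 0) = c • Q 0)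
    (s t : ℕ) (hs : 0 < s) (hst : s < t) (ht : t ≤ m - 1) :
    logDist v (Q t) (Q 0) ≤ logDist v (Q s) (Q 0) ∧
      logDist v (Q t) (Q s) = logDist v (Q t) (Q 0) :=
  logDist_orbit_lemma_general v hv0 hvfin hvmul hvadd d hd a b hgood m Q hQne horb hfix s t hst ht
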